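/- If Z ~ BASLG₂(α), then E(Z²) = π²(140 + 392π²α² + 155π⁴α⁴)/(7(60 + 40π²α² + 7π⁴α⁴)). -/

import Mathlib

open Real MeasureTheory

noncomputable def C₂ (α : ℝ) : ℝ := (60 + 40 * π ^ 2 * α ^ 2 + 7 * π ^ 4 * α ^ 4) / 15

noncomputable def f (z α : ℝ) : ℝ :=
  ((1 - α * z) ^ 2 + 1) ^ 2 * Real.exp (-z) / (C₂ α * (1 + Real.exp (-z)) ^ 2)

/-!
Up to the factor `1 / C₂ α`, the density is `((1 - α z)² + 1)²` times the logistic density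
`g z = e⁻ᶻ / (1 + e⁻ᶻ)²`, so `E(Z²)` is a combination of the moments of `g` of orders 2 to 6.
As `g` is even, its odd moments vanish. For `z > 0` one has `g z = ∑ₙ (-1)ⁿ⁺¹ n e⁻ⁿᶻ`, and
integrating termwise gives `∫ zᵏ g = 2 k! η(k) = 2 k! (1 - 2¹⁻ᵏ) ζ(k)` for even `k ≥ 2`; the values
of `ζ(2)`, `ζ(4)`, `ζ(6)` then give the moments `π²/3`, `7π⁴/15`, `31π⁶/21`.
-/

open Set
open scoped Nat

lemma integral_pow_mul_exp_neg_mul_Ioi (k : ℕ) {c : ℝ} (hc : 0 < c) :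
    ∫ x in Ioi 0, x ^ k * exp (-(c * x)) = k ! / c ^ (k + 1) := by
  have h := integral_rpow_mul_exp_neg_mul_Ioi (a := k + 1) (by positivity) hc
  simp only [add_sub_cancel_right, rpow_natCast] at h
  rw [h, Gamma_nat_eq_factorial, ← Nat.cast_add_one, rpow_natCast, one_div, inv_pow,
    div_eq_inv_mul]

lemma integrableOn_pow_mul_exp_neg_mul_Ioi (k : ℕ) {c : ℝ} (hc : 0 < c) :
    IntegrableOn (fun x ↦ x ^ k * exp (-(c * x))) (Ioi 0) :=
  .of_integral_ne_zero (by rw [integral_pow_mul_exp_neg_mul_Ioi k hc]; positivity)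

noncomputable def logisticDensity (z : ℝ) : ℝ := exp (-z) / (1 + exp (-z)) ^ 2

lemma logisticDensity_neg (z : ℝ) : logisticDensity (-z) = logisticDensity z := by
  have h := (exp_pos z).ne'
  simp only [logisticDensity, neg_neg, exp_neg]
  field_simp
  ring

lemma continuous_logisticDensity : Continuous logisticDensity := by
  unfold logisticDensity
  exact (continuous_exp.comp continuous_neg).div (by fun_prop) fun z ↦ by positivity

lemma logisticDensity_nonneg (z : ℝ) : 0 ≤ logisticDensity z := by
  unfold logisticDensity; positivity

lemma logisticDensity_le_exp_neg (z : ℝ) : logisticDensity z ≤ exp (-z) :=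
  div_le_self (exp_nonneg _) (one_le_pow₀ (le_add_of_nonneg_right (exp_nonneg _)))

lemma hasSum_logisticDensity {z : ℝ} (hz : 0 < z) :
    HasSum (fun n : ℕ ↦ (-1) ^ (n + 1) * n * exp (-(n * z))) (logisticDensity z) := by
  have hr : ‖-exp (-z)‖ < 1 := by
    rw [norm_neg, norm_of_nonneg (exp_nonneg _), exp_lt_one_iff]
    linarith
  have h_terms : (fun n : ℕ ↦ (-1) ^ (n + 1) * n * exp (-(n * z)))
      = fun n : ℕ ↦ -(n * (-exp (-z)) ^ n) := by
    funext n
    rw [neg_pow (exp (-z)), ← exp_nat_mul, mul_neg]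
    ring
  have h_sum : logisticDensity z = -(-exp (-z) / (1 - -exp (-z)) ^ 2) := by
    rw [logisticDensity, sub_neg_eq_add]
    ring
  rw [h_terms, h_sum]
  exact (hasSum_coe_mul_geometric_of_norm_lt_one hr).neg

lemma integrableOn_Ioi_pow_mul_logisticDensity (k : ℕ) :
    IntegrableOn (fun z ↦ z ^ k * logisticDensity z) (Ioi 0) := by
  refine (integrableOn_pow_mul_exp_neg_mul_Ioi k one_pos).mono'
    ((continuous_pow k).mul continuous_logisticDensity).aestronglyMeasurable ?_
  filter_upwards [ae_restrict_mem measurableSet_Ioi] with z hz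
  rw [norm_mul, norm_of_nonneg (pow_nonneg (le_of_lt hz) k),
    norm_of_nonneg (logisticDensity_nonneg z), one_mul]
  exact mul_le_mul_of_nonneg_left (logisticDensity_le_exp_neg z) (pow_nonneg (le_of_lt hz) k)

lemma integrable_pow_mul_logisticDensity (k : ℕ) :
    Integrable fun z ↦ z ^ k * logisticDensity z := by
  have hIci : IntegrableOn (fun z ↦ z ^ k * logisticDensity z) (Ici 0) :=
    (integrableOn_Ici_iff_integrableOn_Ioi).mpr (integrableOn_Ioi_pow_mul_logisticDensity k)
  have hIic : IntegrableOn (fun z ↦ z ^ k * logisticDensity z) (Iic 0) := by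
    have h := ((neg_zero (G := ℝ)).symm ▸ hIci).comp_neg_Iic.const_mul ((-1) ^ k)
    refine IntegrableOn.congr_fun h (fun z _ ↦ ?_) measurableSet_Iic
    rw [neg_pow z, logisticDensity_neg, ← mul_assoc, ← mul_assoc, ← pow_add,
      Even.neg_one_pow ⟨k, rfl⟩, one_mul]
  rw [← integrableOn_univ, ← Iic_union_Ici]
  exact hIic.union hIci

lemma integral_Ioi_pow_mul_logisticDensity {k : ℕ} (hk : 2 ≤ k) :
    ∫ z in Ioi 0, z ^ k * logisticDensity z
      = ∑' n : ℕ, (-1) ^ (n + 1) * n * (k ! / (n : ℝ) ^ (k + 1)) := by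
  set F : ℕ → ℝ → ℝ := fun n z ↦ (-1) ^ (n + 1) * n * (z ^ k * exp (-(n * z)))
  have hF_int (n : ℕ) : Integrable (F n) (volume.restrict (Ioi 0)) := by
    rcases n.eq_zero_or_pos with rfl | hn
    · simp [F]
    · exact (integrableOn_pow_mul_exp_neg_mul_Ioi k (Nat.cast_pos.mpr hn)).const_mul _
  have h_integral (n : ℕ) (c : ℝ) :
      ∫ z in Ioi 0, c * n * (z ^ k * exp (-(n * z))) = c * n * (k ! / (n : ℝ) ^ (k + 1)) := by
    rcases n.eq_zero_or_pos with rfl | hn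
    · simp
    · rw [integral_const_mul, integral_pow_mul_exp_neg_mul_Ioi k (Nat.cast_pos.mpr hn)]
  have h_norm (n : ℕ) : ∫ z in Ioi 0, ‖F n z‖ = n * (k ! / (n : ℝ) ^ (k + 1)) := by
    have h := h_integral n 1
    rw [one_mul] at h
    rw [← h]
    refine setIntegral_congr_fun measurableSet_Ioi fun z hz ↦ ?_
    simp only [F, norm_mul, norm_pow, norm_neg, norm_one, one_pow, one_mul, Real.norm_natCast,
      norm_of_nonneg (pow_nonneg (le_of_lt hz) k), norm_of_nonneg (exp_nonneg _)]
  have h_summable : Summable fun n ↦ ∫ z in Ioi 0, ‖F n z‖ := by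
    refine ((Real.summable_one_div_nat_pow.mpr hk).mul_left (k ! : ℝ)).congr fun n ↦ ?_
    rw [h_norm]
    rcases n.eq_zero_or_pos with rfl | hn
    · simp [show k ≠ 0 by omega]
    · field_simp
      ring
  calc ∫ z in Ioi 0, z ^ k * logisticDensity z = ∫ z in Ioi 0, ∑' n, F n z := by
        refine setIntegral_congr_fun measurableSet_Ioi fun z hz ↦ ?_
        rw [← ((hasSum_logisticDensity hz).mul_left (z ^ k)).tsum_eq]
        congr 1 with n
        ring
    _ = ∑' n, ∫ z in Ioi 0, F n z :=
        (integral_tsum_of_summable_integral_norm hF_int h_summable).symm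
    _ = _ := by simp only [F, h_integral]

lemma hasSum_neg_one_pow_div_pow {k : ℕ} {Z : ℝ}
    (hZ : HasSum (fun n : ℕ ↦ 1 / (n : ℝ) ^ k) Z) :
    HasSum (fun n : ℕ ↦ (-1) ^ (n + 1) / (n : ℝ) ^ k) ((1 - 2 / 2 ^ k) * Z) := by
  set e : ℕ → ℝ := {n | Even n}.indicator fun n ↦ 1 / (n : ℝ) ^ k
  have he : HasSum e (Z / 2 ^ k) := by
    have h_double : Function.Injective (2 * · : ℕ → ℕ) := mul_right_injective₀ two_ne_zero
    have h_comp : e ∘ (2 * ·) = fun n : ℕ ↦ 1 / (n : ℝ) ^ k / 2 ^ k := by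
      funext n
      simp only [e, Function.comp_apply,
        indicator_of_mem (show 2 * n ∈ {n | Even n} from even_two_mul n)]
      push_cast
      ring
    rw [← h_double.hasSum_iff fun n hn ↦ ?_, h_comp]
    · exact hZ.div_const _
    · obtain ⟨m, rfl⟩ | h_odd := n.even_or_odd
      · exact (hn ⟨m, two_mul m⟩).elim
      · simp [e, Nat.not_even_iff_odd.mpr h_odd]
  have h_terms :
      (fun n : ℕ ↦ (-1) ^ (n + 1) / (n : ℝ) ^ k) = fun n : ℕ ↦ 1 / (n : ℝ) ^ k - 2 * e n := by
    funext n
    rcases n.even_or_odd with h | h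
    · simp only [e, h, h.add_one.neg_one_pow, indicator_of_mem, mem_ofPred_eq]
      ring
    · simp only [e, Nat.not_even_iff_odd.mpr h, h.add_one.neg_one_pow, indicator_of_notMem,
        mem_ofPred_eq, not_false_eq_true, mul_zero, sub_zero]
  rw [h_terms, show (1 - 2 / 2 ^ k) * Z = Z - 2 * (Z / 2 ^ k) by ring]
  exact hZ.sub (he.mul_left 2)

lemma integral_pow_mul_logisticDensity_of_even {k : ℕ} (hk : Even k) (hk₂ : 2 ≤ k) {Z : ℝ}
    (hZ : HasSum (fun n : ℕ ↦ 1 / (n : ℝ) ^ k) Z) :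
    ∫ z, z ^ k * logisticDensity z = 2 * k ! * ((1 - 2 / 2 ^ k) * Z) := by
  have h_abs : (fun z ↦ z ^ k * logisticDensity z) = fun z ↦ |z| ^ k * logisticDensity |z| := by
    funext z
    rcases abs_choice z with h | h <;> simp only [h, hk.neg_pow, logisticDensity_neg]
  have h_series : ∑' n : ℕ, (-1) ^ (n + 1) * n * (k ! / (n : ℝ) ^ (k + 1))
      = k ! * ((1 - 2 / 2 ^ k) * Z) := by
    rw [← ((hasSum_neg_one_pow_div_pow hZ).mul_left (k ! : ℝ)).tsum_eq]
    congr 1 with n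
    rcases n.eq_zero_or_pos with rfl | hn
    · simp [show k ≠ 0 by omega]
    · field_simp
      ring
  rw [h_abs, integral_comp_abs (f := fun z ↦ z ^ k * logisticDensity z),
    integral_Ioi_pow_mul_logisticDensity hk₂, h_series, mul_assoc]

lemma integral_pow_mul_logisticDensity_of_odd {k : ℕ} (hk : Odd k) :
    ∫ z, z ^ k * logisticDensity z = 0 := by
  have h := integral_neg_eq_self (fun z ↦ z ^ k * logisticDensity z) volume
  simp only [hk.neg_pow, logisticDensity_neg, neg_mul, integral_neg] at h
  linarith

lemma bernoulli'_five : bernoulli' 5 = 0 := by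
  rw [bernoulli'_def]
  norm_num [Finset.sum_range_succ, Nat.choose]

lemma bernoulli'_six : bernoulli' 6 = 1 / 42 := by
  rw [bernoulli'_def]
  norm_num [Finset.sum_range_succ, Nat.choose, bernoulli'_five]

lemma hasSum_zeta_six : HasSum (fun n : ℕ ↦ (1 : ℝ) / (n : ℝ) ^ 6) (π ^ 6 / 945) := by
  convert hasSum_zeta_nat three_ne_zero using 1
  rw [bernoulli_eq_bernoulli'_of_ne_one (by norm_num), bernoulli'_six]
  norm_num [Nat.factorial]
  field_simp
  ring

lemma integral_sq_mul_logisticDensity : ∫ z, z ^ 2 * logisticDensity z = π ^ 2 / 3 := by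
  rw [integral_pow_mul_logisticDensity_of_even even_two le_rfl hasSum_zeta_two]
  norm_num [Nat.factorial]
  ring

lemma integral_pow_four_mul_logisticDensity : ∫ z, z ^ 4 * logisticDensity z = 7 * π ^ 4 / 15 := by
  rw [integral_pow_mul_logisticDensity_of_even ⟨2, rfl⟩ (by norm_num) hasSum_zeta_four]
  norm_num [Nat.factorial]
  ring

lemma integral_pow_six_mul_logisticDensity : ∫ z, z ^ 6 * logisticDensity z = 31 * π ^ 6 / 21 := by
  rw [integral_pow_mul_logisticDensity_of_even ⟨3, rfl⟩ (by norm_num) hasSum_zeta_six]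
  norm_num [Nat.factorial]
  ring

theorem BASLG2_second_moment (α : ℝ) :
    ∫ z : ℝ, z ^ 2 * f z α
      = π ^ 2 * (140 + 392 * π ^ 2 * α ^ 2 + 155 * π ^ 4 * α ^ 4)
        / (7 * (60 + 40 * π ^ 2 * α ^ 2 + 7 * π ^ 4 * α ^ 4)) := by
  set m : ℕ → ℝ → ℝ := fun k z ↦ z ^ k * logisticDensity z
  have hm : ∀ k, Integrable (m k) := integrable_pow_mul_logisticDensity
  have h_expand : (fun z ↦ z ^ 2 * f z α) = fun z ↦ (C₂ α)⁻¹ *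
      (4 * m 2 z - 8 * α * m 3 z + 8 * α ^ 2 * m 4 z - 4 * α ^ 3 * m 5 z + α ^ 4 * m 6 z) := by
    funext z
    simp only [m, f, logisticDensity]
    field_simp
    ring
  have h_moments : ∫ z, (4 * m 2 z - 8 * α * m 3 z + 8 * α ^ 2 * m 4 z - 4 * α ^ 3 * m 5 z
      + α ^ 4 * m 6 z)
      = 4 * (π ^ 2 / 3) + 8 * α ^ 2 * (7 * π ^ 4 / 15) + α ^ 4 * (31 * π ^ 6 / 21) := by
    simp (disch := fun_prop) only [integral_add, integral_sub, integral_const_mul]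
    simp only [m, integral_sq_mul_logisticDensity, integral_pow_four_mul_logisticDensity,
      integral_pow_six_mul_logisticDensity,
      integral_pow_mul_logisticDensity_of_odd (k := 3) ⟨1, rfl⟩,
      integral_pow_mul_logisticDensity_of_odd (k := 5) ⟨2, rfl⟩]
    ring
  rw [h_expand, integral_const_mul, h_moments, C₂]
  field_simp
  ring
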